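/- arXiv:2605.15439 — 5 statements merged into one kernel-verified Lean document; each statement's English description precedes it below -/
import Mathlib

section
/- Let ρ_{BE} be a density operator on a finite-dimensional tensor product Hilbert space B ⊗ E, with marginals ρ_B = Tr_E(ρ_{BE}) and ρ_E = Tr_B(ρ_{BE}). Then Tr(ρ_B²) + Tr(ρ_E²) ≤ 1 + Tr(ρ_{BE}²). -/
/-!
Write `F_B`, `F_E` for the operators on two copies of `B ⊗ E` exchanging the `B`-factors,
respectively the `E`-factors, of the copies. Then `Tr ρ_B² = Tr[(ρ ⊗ ρ) F_B]`,
`Tr ρ_E² = Tr[(ρ ⊗ ρ) F_E]`, `Tr ρ² = Tr[(ρ ⊗ ρ) F_B F_E]` and `1 = Tr(ρ ⊗ ρ)`, so the claim is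
`0 ≤ Tr[(ρ ⊗ ρ)(1 - F_B)(1 - F_E)]`. Since `F_B`, `F_E` are commuting self-adjoint involutions,
`(1 - F_B)(1 - F_E)` is four times a product of commuting projections, hence positive, and
`ρ ⊗ ρ` is positive as well.
-/

open scoped ENNReal ComplexOrder Matrix
open Matrix

noncomputable section

namespace EoP

/-- Partial trace over the right (second) tensor factor. -/
def ptraceRight {α β : Type*} [Fintype β] (A : Matrix (α × β) (α × β) ℂ) : Matrix α α ℂ :=
  fun a b => ∑ j, A (a, j) (b, j)

/-- Partial trace over the left (first) tensor factor. -/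
def ptraceLeft {α β : Type*} [Fintype α] (A : Matrix (α × β) (α × β) ℂ) : Matrix β β ℂ :=
  fun a b => ∑ i, A (i, a) (i, b)

/-- `Ω ⊗ id`, acting blockwise on the left tensor factor. -/
def mapLeft {α α' β : Type*} (Ω : Matrix α α ℂ → Matrix α' α' ℂ)
    (A : Matrix (α × β) (α × β) ℂ) : Matrix (α' × β) (α' × β) ℂ :=
  fun p q => Ω (fun a b => A (a, p.2) (b, q.2)) p.1 q.1

/-- `id ⊗ Λ`, acting blockwise on the right tensor factor. -/
def mapRight {α α' β : Type*} (Λ : Matrix α α ℂ → Matrix α' α' ℂ)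
    (A : Matrix (β × α) (β × α) ℂ) : Matrix (β × α') (β × α') ℂ :=
  fun p q => Λ (fun a b => A (p.1, a) (q.1, b)) p.2 q.2

/-- The normalized maximally entangled state `|Φ⟩⟨Φ|` on `α ⊗ α`. -/
def maxEntState (α : Type*) [Fintype α] [DecidableEq α] : Matrix (α × α) (α × α) ℂ :=
  fun x y => if x.1 = x.2 ∧ y.1 = y.2 then (Fintype.card α : ℂ)⁻¹ else 0

/-- Complete positivity: `Ω ⊗ id_k` preserves positive semidefiniteness for every
finite-dimensional ancilla. -/
def IsCompletelyPositive {α α' : Type*} [Fintype α] [Fintype α'] (Ω : Matrix α α ℂ → Matrix α' α' ℂ) : Prop :=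
  ∀ (k : ℕ) (A : Matrix (α × Fin k) (α × Fin k) ℂ), A.PosSemidef → (mapLeft Ω A).PosSemidef

/-- Trace preservation. -/
def IsTracePreserving {α α' : Type*} [Fintype α] [Fintype α']
    (Ω : Matrix α α ℂ → Matrix α' α' ℂ) : Prop :=
  ∀ X, (Ω X).trace = X.trace

/-- CPTP map: linear, completely positive and trace preserving. -/
def IsCPTP {α α' : Type*} [Fintype α] [Fintype α']
    (Ω : Matrix α α ℂ → Matrix α' α' ℂ) : Prop :=
  IsLinearMap ℂ Ω ∧ IsCompletelyPositive Ω ∧ IsTracePreserving Ω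

/-- Schatten `p`-norm of a (square, complex) matrix, via its singular values,
i.e. `‖A‖_p = (Tr |A|^p)^(1/p)` for `p < ∞` and the largest singular value for `p = ∞`. -/
def schattenNorm {α : Type*} [Fintype α] [DecidableEq α] (p : ℝ≥0∞)
    (A : Matrix α α ℂ) : ℝ :=
  if p = ⊤ then
    ⨆ i, Real.sqrt ((Matrix.posSemidef_conjTranspose_mul_self A).1.eigenvalues i)
  else
    (∑ i, Real.sqrt ((Matrix.posSemidef_conjTranspose_mul_self A).1.eigenvalues i) ^ p.toReal)
      ^ (1 / p.toReal)

/-- The constrained maximal output Schatten `p`-norm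
`υ_p(Ω) = sup_{E, Λ CPTP} ‖(Ω ⊗ id_E)((id ⊗ Λ)(Φ))‖_p`. -/
def upsilon {α α' : Type*} [Fintype α] [DecidableEq α] [Fintype α'] [DecidableEq α']
    (p : ℝ≥0∞) (Ω : Matrix α α ℂ → Matrix α' α' ℂ) : ℝ :=
  ⨆ e : ℕ, ⨆ Λ : {Λ : Matrix α α ℂ → Matrix (Fin e) (Fin e) ℂ // IsCPTP Λ},
    schattenNorm p (mapLeft Ω (mapRight Λ.1 (maxEntState α)))

/-- The transpose-depolarizing channel `Γ_t(X) = t Xᵀ + (1−t) Tr(X) I/d`. -/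
def Gamma (d : ℕ) (t : ℝ) (X : Matrix (Fin d) (Fin d) ℂ) : Matrix (Fin d) (Fin d) ℂ :=
  (t : ℂ) • Xᵀ + (((1 - t) / (d : ℝ) : ℝ) : ℂ) • X.trace • (1 : Matrix (Fin d) (Fin d) ℂ)

/-- The completely depolarizing map `D(X) = Tr(X) I/d`. -/
def depol (d : ℕ) (X : Matrix (Fin d) (Fin d) ℂ) : Matrix (Fin d) (Fin d) ℂ :=
  ((d : ℂ)⁻¹) • X.trace • (1 : Matrix (Fin d) (Fin d) ℂ)

/-- `n`-fold tensor power of a (linear) map on matrix algebras. -/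
def tensorPowMap {α α' : Type*} [Fintype α] [DecidableEq α] (n : ℕ)
    (Φ : Matrix α α ℂ → Matrix α' α' ℂ)
    (X : Matrix (Fin n → α) (Fin n → α) ℂ) :
    Matrix (Fin n → α') (Fin n → α') ℂ :=
  fun a b => ∑ k : Fin n → α, ∑ l : Fin n → α,
    (∏ i, Φ (Matrix.single (k i) (l i) 1) (a i) (b i)) * X k l

/-- The swap (flip) operator on `ℂ^d ⊗ ℂ^d`. -/
def swapOp (d : ℕ) : Matrix (Fin d × Fin d) (Fin d × Fin d) ℂ :=
  fun p q => if p.1 = q.2 ∧ p.2 = q.1 then 1 else 0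

end EoP

open scoped Kronecker

theorem one_sub_mul_self_of_mul_self_eq_one {R : Type*} [Ring R] {p : R} (hp : p * p = 1) :
    (1 - p) * (1 - p) = 2 * (1 - p) := by
  rw [sub_mul, mul_sub, mul_sub, hp]
  noncomm_ring

theorem star_mul_self_one_sub_mul_one_sub {R : Type*} [Ring R] [StarRing R] {p q : R}
    (hp : IsSelfAdjoint p) (hq : IsSelfAdjoint q) (hp2 : p * p = 1) (hq2 : q * q = 1)
    (hpq : Commute p q) :
    star ((1 - p) * (1 - q)) * ((1 - p) * (1 - q)) = 4 * ((1 - p) * (1 - q)) := by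
  have hc : Commute (1 - p) (1 - q) :=
    (Commute.one_right _).sub_right ((Commute.one_left q).sub_left hpq)
  rw [star_mul, star_sub, star_sub, star_one, hp.star_eq, hq.star_eq, ← hc.eq]
  calc (1 - p) * (1 - q) * ((1 - p) * (1 - q))
      = (1 - p) * (1 - p) * ((1 - q) * (1 - q)) := by
        rw [mul_assoc, ← mul_assoc (1 - q), ← hc.eq]
        noncomm_ring
    _ = 4 * ((1 - p) * (1 - q)) := by
        rw [one_sub_mul_self_of_mul_self_eq_one hp2, one_sub_mul_self_of_mul_self_eq_one hq2]
        noncomm_ring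

namespace Matrix

section PosSemidef

variable {ι 𝕜 : Type*} [Fintype ι] [RCLike 𝕜] {M : Matrix ι ι 𝕜}

theorem PosSemidef.trace_mul_conjTranspose_mul_self_nonneg (hM : M.PosSemidef)
    (X : Matrix ι ι 𝕜) : 0 ≤ (M * (Xᴴ * X)).trace := by
  rw [← Matrix.mul_assoc, trace_mul_comm, ← Matrix.mul_assoc]
  exact (hM.mul_mul_conjTranspose_same X).trace_nonneg

theorem PosSemidef.trace_mul_add_trace_mul_le [DecidableEq ι] {P Q : Matrix ι ι 𝕜}
    (hM : M.PosSemidef) (hP : P.IsHermitian) (hQ : Q.IsHermitian) (hP2 : P * P = 1)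
    (hQ2 : Q * Q = 1) (hPQ : Commute P Q) :
    (M * P).trace + (M * Q).trace ≤ M.trace + (M * (P * Q)).trace := by
  have h := hM.trace_mul_conjTranspose_mul_self_nonneg ((1 - P) * (1 - Q))
  rw [← star_eq_conjTranspose, star_mul_self_one_sub_mul_one_sub hP hQ hP2 hQ2 hPQ,
    ← map_ofNat (algebraMap 𝕜 _) 4, ← Algebra.smul_def, Matrix.mul_smul, trace_smul,
    smul_eq_mul] at h
  rw [← sub_nonneg]
  convert mul_nonneg (show (0 : 𝕜) ≤ 4⁻¹ by positivity) h using 1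
  simp only [mul_sub, sub_mul, Matrix.mul_one, Matrix.one_mul, trace_sub]
  ring

end PosSemidef

section Permutation

variable {ι R : Type*} [DecidableEq ι] {σ : Equiv.Perm ι}

theorem trace_mul_permMatrix [Fintype ι] [NonAssocSemiring R] (M : Matrix ι ι R)
    (σ : Equiv.Perm ι) : (M * σ.permMatrix R).trace = ∑ i, M i (σ.symm i) := by
  simp [trace, PEquiv.mul_toMatrix_toPEquiv]

theorem isHermitian_permMatrix_of_mul_self [NonAssocSemiring R] [StarRing R]
    (hσ : σ * σ = 1) : (σ.permMatrix R).IsHermitian := by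
  rw [IsHermitian, conjTranspose_permMatrix, inv_eq_of_mul_eq_one_right hσ]

theorem permMatrix_mul_self_of_mul_self [Fintype ι] [NonAssocSemiring R] (hσ : σ * σ = 1) :
    σ.permMatrix R * σ.permMatrix R = 1 := by
  rw [← permMatrix_mul, hσ, permMatrix_one]

theorem trace_kronecker_mul_permMatrix_prodComm [Fintype ι] [CommSemiring R]
    (A B : Matrix ι ι R) :
    ((A ⊗ₖ B) * Equiv.Perm.permMatrix R (Equiv.prodComm ι ι)).trace = (A * B).trace := by
  rw [trace_mul_permMatrix]
  simp [Fintype.sum_prod_type, trace, mul_apply]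

end Permutation

end Matrix

namespace EoP

def swapFst (α β : Type*) : Equiv.Perm ((α × β) × (α × β)) where
  toFun p := ((p.2.1, p.1.2), (p.1.1, p.2.2))
  invFun p := ((p.2.1, p.1.2), (p.1.1, p.2.2))
  left_inv _ := rfl
  right_inv _ := rfl

def swapSnd (α β : Type*) : Equiv.Perm ((α × β) × (α × β)) where
  toFun p := ((p.1.1, p.2.2), (p.2.1, p.1.2))
  invFun p := ((p.1.1, p.2.2), (p.2.1, p.1.2))
  left_inv _ := rfl
  right_inv _ := rfl

section Swap

variable {α β : Type*}

theorem swapFst_mul_self : swapFst α β * swapFst α β = 1 := rfl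

theorem swapSnd_mul_self : swapSnd α β * swapSnd α β = 1 := rfl

theorem swapFst_mul_swapSnd : swapFst α β * swapSnd α β = Equiv.prodComm _ _ := rfl

theorem swapSnd_mul_swapFst : swapSnd α β * swapFst α β = Equiv.prodComm _ _ := rfl

variable [Fintype α] [Fintype β] [DecidableEq α] [DecidableEq β]

theorem trace_kronecker_mul_permMatrix_swapFst (A B : Matrix (α × β) (α × β) ℂ) :
    ((A ⊗ₖ B) * (swapFst α β).permMatrix ℂ).trace = (ptraceRight A * ptraceRight B).trace := by
  rw [trace_mul_permMatrix]
  simp only [Fintype.sum_prod_type, trace, diag, mul_apply, ptraceRight, Finset.sum_mul_sum]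
  exact Finset.sum_congr rfl fun _ _ => Finset.sum_comm

theorem trace_kronecker_mul_permMatrix_swapSnd (A B : Matrix (α × β) (α × β) ℂ) :
    ((A ⊗ₖ B) * (swapSnd α β).permMatrix ℂ).trace = (ptraceLeft A * ptraceLeft B).trace := by
  rw [trace_mul_permMatrix]
  simp only [Fintype.sum_prod_type, trace, diag, mul_apply, ptraceLeft, Finset.sum_mul_sum]
  rw [Finset.sum_comm]
  exact Finset.sum_congr rfl fun _ _ =>
    (Finset.sum_congr rfl fun _ _ => Finset.sum_comm).trans Finset.sum_comm

theorem commute_permMatrix_swapFst_swapSnd :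
    Commute ((swapFst α β).permMatrix ℂ) ((swapSnd α β).permMatrix ℂ) := by
  rw [Commute, SemiconjBy, ← permMatrix_mul, ← permMatrix_mul, swapFst_mul_swapSnd,
    swapSnd_mul_swapFst]

end Swap

/-- Two-party purity inequality: `Tr(ρ_B²) + Tr(ρ_E²) ≤ 1 + Tr(ρ_{BE}²)`. -/
theorem purity_inequality_bipartite
    (B E : Type*) [Fintype B] [DecidableEq B] [Fintype E] [DecidableEq E]
    (ρ : Matrix (B × E) (B × E) ℂ) (hρ : ρ.PosSemidef) (htr : ρ.trace = 1) :
    (ptraceRight ρ * ptraceRight ρ).trace + (ptraceLeft ρ * ptraceLeft ρ).trace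
      ≤ 1 + (ρ * ρ).trace := by
  have key := (hρ.kronecker hρ).trace_mul_add_trace_mul_le
    (isHermitian_permMatrix_of_mul_self swapFst_mul_self)
    (isHermitian_permMatrix_of_mul_self swapSnd_mul_self)
    (permMatrix_mul_self_of_mul_self swapFst_mul_self)
    (permMatrix_mul_self_of_mul_self swapSnd_mul_self)
    commute_permMatrix_swapFst_swapSnd
  rwa [trace_kronecker_mul_permMatrix_swapFst, trace_kronecker_mul_permMatrix_swapSnd,
    ← permMatrix_mul, swapSnd_mul_swapFst, trace_kronecker_mul_permMatrix_prodComm,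
    trace_kronecker, htr, one_mul] at key

end EoP
end
end

section
/- Let B be a finite-dimensional system and let σ_{AB} ∈ F_d(B). Then Tr(σ_{AB}²) + Tr(σ_B²) ≤ 1 + 1/d, where σ_B = Tr_A(σ_{AB}). -/
open scoped ENNReal ComplexOrder Matrix
open Matrix

noncomputable section

namespace Matrix

variable {n 𝕜 : Type*} [Fintype n] [RCLike 𝕜]

open scoped MatrixOrder in
lemma PosSemidef.trace_mul_nonneg {A B : Matrix n n 𝕜} (hA : A.PosSemidef) (hB : B.PosSemidef) :
    0 ≤ (A * B).trace := by
  classical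
  obtain ⟨C, rfl⟩ := CStarAlgebra.nonneg_iff_eq_star_mul_self.mp hA.nonneg
  rw [star_eq_conjTranspose, mul_assoc, trace_mul_comm]
  exact (hB.mul_mul_conjTranspose_same C).trace_nonneg

lemma posSemidef_one_add_of_mul_self_eq_one [DecidableEq n] {S : Matrix n n 𝕜}
    (hS : S.IsHermitian) (hSS : S * S = 1) : (1 + S).PosSemidef := by
  have hhalf : 1 + S = (2⁻¹ : 𝕜) • ((1 + S)ᴴ * (1 + S)) := by
    rw [conjTranspose_add, conjTranspose_one, hS.eq]
    simp only [add_mul, mul_add, one_mul, mul_one, hSS]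
    module
  rw [hhalf]
  exact (posSemidef_conjTranspose_mul_self _).smul (by positivity)

lemma posSemidef_one_sub_of_mul_self_eq_one [DecidableEq n] {S : Matrix n n 𝕜}
    (hS : S.IsHermitian) (hSS : S * S = 1) : (1 - S).PosSemidef := by
  rw [sub_eq_add_neg]
  exact posSemidef_one_add_of_mul_self_eq_one hS.neg (by rw [neg_mul_neg, hSS])

end Matrix

namespace EoP

open scoped Kronecker

def swapMatrix (R α : Type*) [Zero R] [One R] [DecidableEq α] : Matrix (α × α) (α × α) R :=
  (1 : Matrix (α × α) (α × α) R).submatrix Prod.swap id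

section swapMatrix

variable {R α β : Type*} [CommSemiring R] [DecidableEq α] [DecidableEq β]

lemma swapMatrix_isHermitian [StarRing R] : (swapMatrix R α).IsHermitian := by
  ext ⟨a, b⟩ ⟨c, e⟩
  simp [swapMatrix, one_apply, and_comm, eq_comm, apply_ite star]

lemma swapMatrix_mul_self [Fintype α] : swapMatrix R α * swapMatrix R α = 1 := by
  ext p q
  simp [swapMatrix, mul_apply, one_apply, Prod.swap_eq_iff_eq_swap]

lemma trace_kronecker_mul_swapMatrix [Fintype α] (A B : Matrix α α R) :
    ((A ⊗ₖ B) * swapMatrix R α).trace = (A * B).trace := by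
  simp [swapMatrix, trace, mul_apply, one_apply, Fintype.sum_prod_type, Prod.ext_iff, ite_and,
    Finset.sum_ite_eq']

lemma kronecker_swapMatrix_submatrix :
    (swapMatrix R α ⊗ₖ swapMatrix R β).submatrix (Equiv.prodProdProdComm α β α β)
      (Equiv.prodProdProdComm α β α β) = swapMatrix R (α × β) := by
  ext p q
  simp only [swapMatrix, submatrix_apply, kroneckerMap_apply, one_apply, Prod.ext_iff, mul_ite,
    mul_one, mul_zero, ← ite_and]
  exact if_congr (by tauto) rfl rfl

end swapMatrix

section swapMatrix_partialTrace

variable {α β : Type*} [Fintype α] [DecidableEq α] [Fintype β] [DecidableEq β]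

lemma trace_kronecker_mul_swapMatrix_kronecker_one (A B : Matrix (α × β) (α × β) ℂ) :
    ((A ⊗ₖ B) * (swapMatrix ℂ α ⊗ₖ (1 : Matrix (β × β) (β × β) ℂ)).submatrix
      (Equiv.prodProdProdComm α β α β) (Equiv.prodProdProdComm α β α β)).trace =
      (ptraceRight A * ptraceRight B).trace := by
  simp [swapMatrix, trace, ptraceRight, mul_apply, one_apply, Fintype.sum_prod_type, Prod.ext_iff,
    ite_and, Finset.sum_ite_eq', Finset.mul_sum, Finset.sum_mul]
  refine Finset.sum_congr rfl fun _ _ => ?_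
  rw [Finset.sum_comm]
  exact Finset.sum_congr rfl fun _ _ => Finset.sum_comm

lemma trace_kronecker_mul_one_kronecker_swapMatrix (A B : Matrix (α × β) (α × β) ℂ) :
    ((A ⊗ₖ B) * ((1 : Matrix (α × α) (α × α) ℂ) ⊗ₖ swapMatrix ℂ β).submatrix
      (Equiv.prodProdProdComm α β α β) (Equiv.prodProdProdComm α β α β)).trace =
      (ptraceLeft A * ptraceLeft B).trace := by
  simp [swapMatrix, trace, ptraceLeft, mul_apply, one_apply, Fintype.sum_prod_type, Prod.ext_iff,
    ite_and, Finset.sum_ite_eq', Finset.mul_sum, Finset.sum_mul]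
  rw [Finset.sum_comm]
  refine Finset.sum_congr rfl fun _ _ => ?_
  conv_lhs => enter [2, y]; rw [Finset.sum_comm]
  rw [Finset.sum_comm]
  exact Finset.sum_congr rfl fun _ _ => Finset.sum_comm

end swapMatrix_partialTrace

theorem trace_mul_self_add_trace_ptraceLeft_mul_self_le {α β : Type*} [Fintype α] [Fintype β]
    {σ : Matrix (α × β) (α × β) ℂ} (hσ : σ.PosSemidef) :
    (σ * σ).trace + (ptraceLeft σ * ptraceLeft σ).trace ≤
      σ.trace * σ.trace + (ptraceRight σ * ptraceRight σ).trace := by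
  classical
  -- Through `e`, `X ⊗ₖ Y` acts as `X` on the two copies of `α` and as `Y` on those of `β`.
  set e := Equiv.prodProdProdComm α β α β
  have hG : (((1 + swapMatrix ℂ α) ⊗ₖ (1 - swapMatrix ℂ β)).submatrix e e).PosSemidef :=
    ((posSemidef_one_add_of_mul_self_eq_one swapMatrix_isHermitian swapMatrix_mul_self).kronecker
      (posSemidef_one_sub_of_mul_self_eq_one swapMatrix_isHermitian swapMatrix_mul_self)).submatrix e
  have hG_expand : ((1 + swapMatrix ℂ α) ⊗ₖ (1 - swapMatrix ℂ β)).submatrix e e =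
      1 + (swapMatrix ℂ α ⊗ₖ (1 : Matrix (β × β) (β × β) ℂ)).submatrix e e
        - ((1 : Matrix (α × α) (α × α) ℂ) ⊗ₖ swapMatrix ℂ β).submatrix e e
        - swapMatrix ℂ (α × β) := by
    rw [← submatrix_one_equiv e, ← one_kronecker_one (m := α × α) (n := β × β),
      ← kronecker_swapMatrix_submatrix]
    ext
    simp only [submatrix_apply, kroneckerMap_apply, Matrix.add_apply, Matrix.sub_apply]
    ring
  have h := (hσ.kronecker hσ).trace_mul_nonneg hG
  rw [hG_expand, mul_sub, mul_sub, mul_add, mul_one, trace_sub, trace_sub, trace_add,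
    trace_kronecker, trace_kronecker_mul_swapMatrix_kronecker_one,
    trace_kronecker_mul_one_kronecker_swapMatrix, trace_kronecker_mul_swapMatrix] at h
  rw [← sub_nonneg]
  convert h using 1
  ring

theorem purity_tradeoff_Fd_general
    (d : ℕ) (B : Type*) [Fintype B]
    (σ : Matrix (Fin d × B) (Fin d × B) ℂ)
    (hσ : σ.PosSemidef) (htr : σ.trace = 1)
    (hmar : ptraceRight σ = (d : ℂ)⁻¹ • (1 : Matrix (Fin d) (Fin d) ℂ)) :
    (σ * σ).trace + (ptraceLeft σ * ptraceLeft σ).trace ≤ 1 + (d : ℂ)⁻¹ := by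
  have hmar_sq : (ptraceRight σ * ptraceRight σ).trace = (d : ℂ)⁻¹ := by
    simpa [hmar, mul_assoc] using mul_self_mul_inv (d : ℂ)⁻¹
  simpa [htr, hmar_sq] using trace_mul_self_add_trace_ptraceLeft_mul_self_le hσ

/-- Purity trade-off on `F_d(B)`: `Tr(σ_{AB}²) + Tr(σ_B²) ≤ 1 + 1/d`. -/
theorem purity_tradeoff_Fd
    (d : ℕ) (B : Type*) [Fintype B] [DecidableEq B]
    (σ : Matrix (Fin d × B) (Fin d × B) ℂ)
    (hσ : σ.PosSemidef) (htr : σ.trace = 1)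
    (hmar : ptraceRight σ = (d : ℂ)⁻¹ • (1 : Matrix (Fin d) (Fin d) ℂ)) :
    (σ * σ).trace + (ptraceLeft σ * ptraceLeft σ).trace ≤ 1 + (d : ℂ)⁻¹ :=
  purity_tradeoff_Fd_general d B σ hσ htr hmar

end EoP
end
end

section
/- Let B be a finite-dimensional system, let t be in the CP-range, and let σ_{AB} ∈ F_d(B) with σ_B = Tr_A(σ_{AB}). Let ω_{AB} := (Γ_t ⊗ id_B)(σ_{AB}). Then ‖ω_{AB}‖₂² = t²·Tr(σ_{AB}²) + ((1−t²)/d)·Tr(σ_B²), where ‖·‖₂ is the Frobenius (Hilbert–Schmidt) norm. -/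
open scoped ENNReal ComplexOrder Matrix
open Matrix

noncomputable section

namespace EoP

/-- Helper: trace of a product as a double sum. -/
lemma trace_mul_expand {n : Type*} [Fintype n] (A C : Matrix n n ℂ) :
    (A * C).trace = ∑ p, ∑ q, A p q * C q p := by
  simp [Matrix.trace, Matrix.mul_apply, Matrix.diag]

/-- Purity identity: `‖(Γ_t ⊗ id_B)(σ)‖₂² = t²·Tr(σ²) + ((1 − t²)/d)·Tr(σ_B²)`. -/
theorem p2_purity_identity
    (d : ℕ) (hd : 2 ≤ d) (t : ℝ) (ht1 : -(1 / ((d : ℝ) - 1)) ≤ t) (ht2 : t ≤ 1 / ((d : ℝ) + 1))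
    (B : Type*) [Fintype B] [DecidableEq B]
    (σ : Matrix (Fin d × B) (Fin d × B) ℂ)
    (hσ : σ.PosSemidef) (htr : σ.trace = 1)
    (hmar : ptraceRight σ = (d : ℂ)⁻¹ • (1 : Matrix (Fin d) (Fin d) ℂ)) :
    ((mapLeft (Gamma d t) σ)ᴴ * mapLeft (Gamma d t) σ).trace
      = ((t ^ 2 : ℝ) : ℂ) * (σ * σ).trace
        + (((1 - t ^ 2) / (d : ℝ) : ℝ) : ℂ) * (ptraceLeft σ * ptraceLeft σ).trace := by
  have hd0 : (d : ℝ) ≠ 0 := by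
    have : (0 : ℕ) < d := by omega
    exact_mod_cast this.ne'
  have hd0' : (d : ℂ) ≠ 0 := by exact_mod_cast (by omega : d ≠ 0)
  set c : ℂ := (((1 - t) / (d : ℝ) : ℝ) : ℂ) with hc
  -- entrywise conjugation symmetry of σ
  have hconjσ : ∀ x y, (starRingEnd ℂ) (σ x y) = σ y x := by
    intro x y
    have := congrFun (congrFun hσ.1 y) x
    simpa [Matrix.conjTranspose_apply] using this
  set S : B → B → ℂ := fun j k => ∑ i, σ (i, j) (i, k) with hS
  have hconjS : ∀ j k, (starRingEnd ℂ) (S j k) = S k j := by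
    intro j k
    simp [hS, map_sum, hconjσ]
  -- explicit entries of ω
  have hω : ∀ p q : Fin d × B, mapLeft (Gamma d t) σ p q
      = (t : ℂ) * σ (q.1, p.2) (p.1, q.2)
        + c * S p.2 q.2 * (if p.1 = q.1 then 1 else 0) := by
    intro p q
    simp only [mapLeft, Gamma, Matrix.add_apply, Matrix.smul_apply, Matrix.transpose_apply,
      Matrix.one_apply, Matrix.trace, Matrix.diag, smul_eq_mul, hS, hc]
    change (t : ℂ) * σ (q.1, p.2) (p.1, q.2) + _ = _
    ring
  -- ω is Hermitian
  have hωH : (mapLeft (Gamma d t) σ)ᴴ = mapLeft (Gamma d t) σ := by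
    ext p q
    rw [Matrix.conjTranspose_apply, hω, hω]
    have hite : (starRingEnd ℂ) (if q.1 = p.1 then (1 : ℂ) else 0)
        = if p.1 = q.1 then (1 : ℂ) else 0 := by
      by_cases h : p.1 = q.1 <;> simp [h, eq_comm]
    simp only [Complex.star_def, map_add, _root_.map_mul, Complex.conj_ofReal,
      hconjσ, hconjS, hite, hc]
  rw [hωH, trace_mul_expand]
  -- pointwise expansion of the summand
  have point : ∀ p q : Fin d × B,
      mapLeft (Gamma d t) σ p q * mapLeft (Gamma d t) σ q p
      = (t : ℂ) ^ 2 * (σ (q.1, p.2) (p.1, q.2) * σ (p.1, q.2) (q.1, p.2))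
        + (((t : ℂ) * c) * (σ (q.1, p.2) (p.1, q.2) * S q.2 p.2)
            * (if p.1 = q.1 then 1 else 0)
          + (((t : ℂ) * c) * (S p.2 q.2 * σ (p.1, q.2) (q.1, p.2))
              * (if p.1 = q.1 then 1 else 0)
            + c ^ 2 * (S p.2 q.2 * S q.2 p.2) * (if p.1 = q.1 then 1 else 0))) := by
    intro p q
    rw [hω, hω]
    by_cases h : p.1 = q.1
    · simp only [if_pos h, if_pos h.symm]
      ring
    · have h' : ¬ q.1 = p.1 := fun hh => h hh.symm
      simp only [if_neg h, if_neg h', mul_zero, add_zero, zero_add, mul_one]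
      ring
  simp only [point]
  simp only [Finset.sum_add_distrib]
  -- term 1 : t² Tr(σ²)
  have hT1 : ∑ p : Fin d × B, ∑ q : Fin d × B,
      (t : ℂ) ^ 2 * (σ (q.1, p.2) (p.1, q.2) * σ (p.1, q.2) (q.1, p.2))
      = ((t ^ 2 : ℝ) : ℂ) * (σ * σ).trace := by
    rw [trace_mul_expand]
    push_cast
    rw [← Fintype.sum_prod_type', ← Fintype.sum_prod_type', ← Finset.mul_sum]
    congr 1
    exact Fintype.sum_equiv
      ⟨fun x => ((x.2.1, x.1.2), (x.1.1, x.2.2)),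
       fun x => ((x.2.1, x.1.2), (x.1.1, x.2.2)),
       fun x => rfl, fun x => rfl⟩
      _ (fun y => σ y.1 y.2 * σ y.2 y.1) (fun x => rfl)
  -- the basic value of the σ_B trace
  have hTB : (ptraceLeft σ * ptraceLeft σ).trace = ∑ j, ∑ k, S j k * S k j := by
    rw [trace_mul_expand]; rfl
  -- term 2
  have hT2 : ∑ p : Fin d × B, ∑ q : Fin d × B,
      ((t : ℂ) * c) * (σ (q.1, p.2) (p.1, q.2) * S q.2 p.2) * (if p.1 = q.1 then 1 else 0)
      = (t : ℂ) * c * ∑ j, ∑ k, S j k * S k j := by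
    rw [Fintype.sum_prod_type]
    simp only [Fintype.sum_prod_type]
    have : ∀ (a : Fin d) (j : B), (∑ b : Fin d, ∑ k : B,
        ((t : ℂ) * c) * (σ (b, j) (a, k) * S k j) * (if a = b then 1 else 0))
        = ∑ k : B, ((t : ℂ) * c) * (σ (a, j) (a, k) * S k j) := by
      intro a j
      rw [Finset.sum_comm]
      refine Finset.sum_congr rfl fun k _ => ?_
      simp [mul_ite]
    simp only [this]
    rw [Finset.sum_comm, Finset.mul_sum]
    refine Finset.sum_congr rfl fun j _ => ?_
    rw [Finset.sum_comm, Finset.mul_sum]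
    refine Finset.sum_congr rfl fun k _ => ?_
    rw [← Finset.mul_sum, ← Finset.sum_mul]
  -- term 3
  have hT3 : ∑ p : Fin d × B, ∑ q : Fin d × B,
      ((t : ℂ) * c) * (S p.2 q.2 * σ (p.1, q.2) (q.1, p.2)) * (if p.1 = q.1 then 1 else 0)
      = (t : ℂ) * c * ∑ j, ∑ k, S j k * S k j := by
    rw [Fintype.sum_prod_type]
    simp only [Fintype.sum_prod_type]
    have : ∀ (a : Fin d) (j : B), (∑ b : Fin d, ∑ k : B,
        ((t : ℂ) * c) * (S j k * σ (a, k) (b, j)) * (if a = b then 1 else 0))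
        = ∑ k : B, ((t : ℂ) * c) * (S j k * σ (a, k) (a, j)) := by
      intro a j
      rw [Finset.sum_comm]
      refine Finset.sum_congr rfl fun k _ => ?_
      simp [mul_ite]
    simp only [this]
    rw [Finset.sum_comm, Finset.mul_sum]
    refine Finset.sum_congr rfl fun j _ => ?_
    rw [Finset.sum_comm, Finset.mul_sum]
    refine Finset.sum_congr rfl fun k _ => ?_
    rw [← Finset.mul_sum, ← Finset.mul_sum]
  -- term 4
  have hT4 : ∑ p : Fin d × B, ∑ q : Fin d × B,
      c ^ 2 * (S p.2 q.2 * S q.2 p.2) * (if p.1 = q.1 then 1 else 0)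
      = (d : ℂ) * c ^ 2 * ∑ j, ∑ k, S j k * S k j := by
    rw [Fintype.sum_prod_type]
    simp only [Fintype.sum_prod_type]
    have : ∀ (a : Fin d) (j : B), (∑ b : Fin d, ∑ k : B,
        c ^ 2 * (S j k * S k j) * (if a = b then 1 else 0))
        = ∑ k : B, c ^ 2 * (S j k * S k j) := by
      intro a j
      rw [Finset.sum_comm]
      refine Finset.sum_congr rfl fun k _ => ?_
      simp [mul_ite]
    simp only [this]
    rw [Finset.sum_const, Finset.card_univ, Fintype.card_fin, nsmul_eq_mul]
    simp only [Finset.mul_sum]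
    exact Finset.sum_congr rfl fun j _ => Finset.sum_congr rfl fun k _ => by ring
  rw [hT1, hT2, hT3, hT4, hTB]
  have hcoef : (t : ℂ) * c + ((t : ℂ) * c + (d : ℂ) * c ^ 2)
      = (((1 - t ^ 2) / (d : ℝ) : ℝ) : ℂ) := by
    rw [hc]
    push_cast
    field_simp
    ring
  rw [← hcoef]
  ring

end EoP
end
end

section
/- Let d ≥ 2 and let t be in the CP-range. Then for every X ∈ M_d(ℂ), ((Γ_t^c)† ∘ Γ_t^c)(X) = ((1−t²)/d)·X + t²·Tr(X)·I_d, where (Γ_t^c)† is the Hilbert–Schmidt adjoint of Γ_t^c. -/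
open scoped ENNReal ComplexOrder Matrix
open Matrix

noncomputable section

namespace EoP

/-- `a⁺ = √((1 + (d−1)t)/(4d))`. -/
def aPlus (d : ℕ) (t : ℝ) : ℝ := Real.sqrt ((1 + ((d : ℝ) - 1) * t) / (4 * d))

/-- `a⁻ = √((1 − (d+1)t)/(4d))`. -/
def aMinus (d : ℕ) (t : ℝ) : ℝ := Real.sqrt ((1 - ((d : ℝ) + 1) * t) / (4 * d))

/-- `S_t = (a⁺ + a⁻)·I + (a⁺ − a⁻)·Π`. -/
def Sop (d : ℕ) (t : ℝ) : Matrix (Fin d × Fin d) (Fin d × Fin d) ℂ :=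
  ((aPlus d t + aMinus d t : ℝ) : ℂ) • (1 : Matrix (Fin d × Fin d) (Fin d × Fin d) ℂ)
    + ((aPlus d t - aMinus d t : ℝ) : ℂ) • swapOp d

/-- Complementary channel of the transpose-depolarizing channel in the
Datta–Fukuda–Holevo representation: `Γ_t^c(X) = S_t (X ⊗ I) S_t`. -/
def GammaC (d : ℕ) (t : ℝ) (X : Matrix (Fin d) (Fin d) ℂ) :
    Matrix (Fin d × Fin d) (Fin d × Fin d) ℂ :=
  Sop d t * (Matrix.kroneckerMap (· * ·) X (1 : Matrix (Fin d) (Fin d) ℂ)) * Sop d t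


section AuxProof
open Kronecker

lemma swap_mul_swap (d : ℕ) : swapOp d * swapOp d = 1 := by
  ext ⟨i,j⟩ ⟨k,l⟩
  simp [swapOp, mul_apply, Fintype.sum_prod_type, one_apply, Prod.ext_iff, ite_and,
    Finset.sum_ite_eq, Finset.sum_ite_eq', and_comm, eq_comm]

lemma swap_conjTranspose (d : ℕ) : (swapOp d)ᴴ = swapOp d := by
  ext ⟨i,j⟩ ⟨k,l⟩
  simp only [swapOp, conjTranspose_apply]
  split <;> split <;> simp_all [eq_comm, and_comm]

lemma swap_mul_kron (d : ℕ) (A B : Matrix (Fin d) (Fin d) ℂ) :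
    swapOp d * (A ⊗ₖ B) * swapOp d = B ⊗ₖ A := by
  ext ⟨i,j⟩ ⟨k,l⟩
  simp [swapOp, mul_apply, Fintype.sum_prod_type, kroneckerMap_apply, ite_and,
    Finset.sum_ite_eq, Finset.sum_ite_eq', mul_comm]

lemma trace_swap_kron (d : ℕ) (A : Matrix (Fin d) (Fin d) ℂ) :
    (swapOp d * (A ⊗ₖ (1 : Matrix (Fin d) (Fin d) ℂ))).trace = A.trace := by
  simp [Matrix.trace, swapOp, mul_apply, Fintype.sum_prod_type, kroneckerMap_apply,
    one_apply, Matrix.diag, ite_and, Finset.sum_ite_eq, Finset.sum_ite_eq']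

lemma Sop_conjTranspose (d : ℕ) (t : ℝ) : (Sop d t)ᴴ = Sop d t := by
  simp [Sop, conjTranspose_add, conjTranspose_smul, swap_conjTranspose, Complex.star_def,
    Complex.conj_ofReal]

lemma Sop_sq (d : ℕ) (hd : 2 ≤ d) (t : ℝ) (ht1 : -(1 / ((d : ℝ) - 1)) ≤ t)
    (ht2 : t ≤ 1 / ((d : ℝ) + 1)) :
    Sop d t * Sop d t
      = (((1 - t) / (d : ℝ) : ℝ) : ℂ) • 1 + ((t : ℝ) : ℂ) • swapOp d := by
  have hd1 : (1 : ℝ) < (d : ℝ) := by exact_mod_cast hd.trans_lt' one_lt_two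
  have hdpos : (0 : ℝ) < (d : ℝ) := by linarith
  have h1 : (0 : ℝ) ≤ (1 + ((d : ℝ) - 1) * t) / (4 * d) := by
    apply div_nonneg _ (by linarith)
    have h := mul_le_mul_of_nonneg_left ht1 (le_of_lt (by linarith : (0:ℝ) < (d:ℝ) - 1))
    rw [mul_neg, mul_one_div, div_self (by linarith : (d:ℝ) - 1 ≠ 0)] at h
    linarith
  have h2 : (0 : ℝ) ≤ (1 - ((d : ℝ) + 1) * t) / (4 * d) := by
    apply div_nonneg _ (by linarith)
    have h := mul_le_mul_of_nonneg_left ht2 (le_of_lt (by linarith : (0:ℝ) < (d:ℝ) + 1))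
    rw [mul_one_div, div_self (by linarith : (d:ℝ) + 1 ≠ 0)] at h
    linarith
  have hp2 : aPlus d t ^ 2 = (1 + ((d : ℝ) - 1) * t) / (4 * d) := Real.sq_sqrt h1
  have hm2 : aMinus d t ^ 2 = (1 - ((d : ℝ) + 1) * t) / (4 * d) := Real.sq_sqrt h2
  have hdne : ((d : ℝ)) ≠ 0 := ne_of_gt hdpos
  have e1 : (aPlus d t + aMinus d t) * (aPlus d t + aMinus d t)
      + (aPlus d t - aMinus d t) * (aPlus d t - aMinus d t) = (1 - t) / d := by
    linear_combination 2 * hp2 + 2 * hm2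
  have e2 : (aPlus d t + aMinus d t) * (aPlus d t - aMinus d t)
      + (aPlus d t - aMinus d t) * (aPlus d t + aMinus d t) = t := by
    linear_combination 2 * hp2 - 2 * hm2 + t * mul_inv_cancel₀ hdne
  have e1' : ((aPlus d t + aMinus d t : ℝ) : ℂ) * ((aPlus d t + aMinus d t : ℝ) : ℂ)
      + ((aPlus d t - aMinus d t : ℝ) : ℂ) * ((aPlus d t - aMinus d t : ℝ) : ℂ)
      = (((1 - t) / (d : ℝ) : ℝ) : ℂ) := by exact_mod_cast congrArg Complex.ofReal e1
  have e2' : ((aPlus d t + aMinus d t : ℝ) : ℂ) * ((aPlus d t - aMinus d t : ℝ) : ℂ)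
      + ((aPlus d t - aMinus d t : ℝ) : ℂ) * ((aPlus d t + aMinus d t : ℝ) : ℂ)
      = ((t : ℝ) : ℂ) := by exact_mod_cast congrArg Complex.ofReal e2
  rw [Sop]
  simp only [add_mul, mul_add, smul_mul_assoc, mul_smul_comm, one_mul, mul_one,
    swap_mul_swap, smul_smul]
  rw [← e1', ← e2']
  module

lemma kron_one_conjTranspose (d : ℕ) (X : Matrix (Fin d) (Fin d) ℂ) :
    (X ⊗ₖ (1 : Matrix (Fin d) (Fin d) ℂ))ᴴ = Xᴴ ⊗ₖ (1 : Matrix (Fin d) (Fin d) ℂ) := by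
  ext ⟨i,j⟩ ⟨k,l⟩
  simp only [conjTranspose_apply, kroneckerMap_apply, star_mul', one_apply]
  split <;> simp_all [eq_comm]

lemma GammaC_conjTranspose (d : ℕ) (t : ℝ) (X : Matrix (Fin d) (Fin d) ℂ) :
    (GammaC d t X)ᴴ = GammaC d t Xᴴ := by
  rw [GammaC, GammaC, conjTranspose_mul, conjTranspose_mul, Sop_conjTranspose,
    kron_one_conjTranspose, mul_assoc]

lemma key_trace (d : ℕ) (hd : 2 ≤ d) (t : ℝ) (ht1 : -(1 / ((d : ℝ) - 1)) ≤ t)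
    (ht2 : t ≤ 1 / ((d : ℝ) + 1)) (X Y : Matrix (Fin d) (Fin d) ℂ) :
    ((GammaC d t X)ᴴ * GammaC d t Y).trace
      = (((1 - t ^ 2) / (d : ℝ) : ℝ) : ℂ) * (Xᴴ * Y).trace
        + ((t ^ 2 : ℝ) : ℂ) * (star X.trace) * Y.trace := by
  have hdC : ((d : ℂ)) ≠ 0 := by
    exact_mod_cast Nat.cast_ne_zero.mpr (by omega : d ≠ 0)
  rw [GammaC_conjTranspose, GammaC, GammaC]
  set T := Sop d t with hT
  set A := Xᴴ ⊗ₖ (1 : Matrix (Fin d) (Fin d) ℂ) with hA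
  set B := Y ⊗ₖ (1 : Matrix (Fin d) (Fin d) ℂ) with hB
  have hre : (T * A * T) * (T * B * T) = T * (A * (T * T) * B) * T := by
    noncomm_ring
  rw [hre, Matrix.trace_mul_cycle, Sop_sq d hd t ht1 ht2]
  have hAB : A * B = (Xᴴ * Y) ⊗ₖ (1 : Matrix (Fin d) (Fin d) ℂ) := by
    rw [hA, hB, ← Matrix.mul_kronecker_mul, one_mul]
  have hTr1 : (A * B).trace = (d : ℂ) * (Xᴴ * Y).trace := by
    rw [hAB, Matrix.trace_kronecker, Matrix.trace_one]
    simp [Fintype.card_fin, mul_comm]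
  have hTr3 : (swapOp d * (A * B)).trace = (Xᴴ * Y).trace := by
    rw [← mul_assoc, mul_assoc, hAB, trace_swap_kron]
  have hTr2 : (A * swapOp d * B).trace = (Xᴴ * Y).trace := by
    rw [mul_assoc, Matrix.trace_mul_comm, mul_assoc, hA, hB,
      ← Matrix.mul_kronecker_mul, mul_one, trace_swap_kron, Matrix.trace_mul_comm]
  have hTr4 : (swapOp d * (A * swapOp d * B)).trace = (star X.trace) * Y.trace := by
    have h1 : swapOp d * (A * swapOp d * B) = (swapOp d * A * swapOp d) * B := by
      noncomm_ring
    rw [h1, hA, swap_mul_kron, hB, ← Matrix.mul_kronecker_mul, one_mul, mul_one,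
      Matrix.trace_kronecker, Matrix.trace_conjTranspose, mul_comm]
  simp only [add_mul, mul_add, smul_mul_assoc, mul_smul_comm, one_mul, mul_one,
    trace_add, trace_smul, smul_smul, smul_eq_mul]
  rw [hTr1, hTr2, hTr3, hTr4]
  push_cast
  field_simp
  ring

lemma trace_conjTranspose_mul_std (d : ℕ) (A : Matrix (Fin d) (Fin d) ℂ) (i j : Fin d) :
    (Aᴴ * Matrix.single i j 1).trace = star (A i j) := by
  simp [Matrix.trace, Matrix.diag, mul_apply, Matrix.single, conjTranspose_apply,
    ite_and, Finset.sum_ite_eq, Finset.sum_ite_eq', eq_comm]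

end AuxProof

/-- `(Γ_t^c)† ∘ Γ_t^c = ((1 − t²)/d)·id + t²·Tr[·]·I`. -/
theorem adjoint_square_GammaC
    (d : ℕ) (hd : 2 ≤ d) (t : ℝ) (ht1 : -(1 / ((d : ℝ) - 1)) ≤ t) (ht2 : t ≤ 1 / ((d : ℝ) + 1))
    (Nadj : Matrix (Fin d × Fin d) (Fin d × Fin d) ℂ → Matrix (Fin d) (Fin d) ℂ)
    (hadj : ∀ (X : Matrix (Fin d) (Fin d) ℂ) (Y : Matrix (Fin d × Fin d) (Fin d × Fin d) ℂ),
      (Yᴴ * GammaC d t X).trace = ((Nadj Y)ᴴ * X).trace) :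
    ∀ X : Matrix (Fin d) (Fin d) ℂ,
      Nadj (GammaC d t X)
        = (((1 - t ^ 2) / (d : ℝ) : ℝ) : ℂ) • X
          + ((t ^ 2 : ℝ) : ℂ) • X.trace • (1 : Matrix (Fin d) (Fin d) ℂ) := by
  intro X
  ext i j
  have h := hadj (Matrix.single i j 1) (GammaC d t X)
  rw [key_trace d hd t ht1 ht2, trace_conjTranspose_mul_std,
    trace_conjTranspose_mul_std] at h
  have hstd : (Matrix.single i j (1 : ℂ)).trace = if i = j then 1 else 0 := by
    simp [Matrix.trace, Matrix.diag, Matrix.single, ite_and, Finset.sum_ite_eq,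
      eq_comm]
  rw [hstd] at h
  have h2 := congrArg star h
  rw [star_star] at h2
  rw [← h2]
  simp only [star_add, star_mul', star_star, Matrix.add_apply, Matrix.smul_apply,
    Matrix.one_apply, smul_eq_mul, Complex.star_def, Complex.conj_conj,
    Complex.conj_ofReal, apply_ite (starRingEnd ℂ), _root_.map_one, _root_.map_zero]
  split <;> ring


end EoP
end
end

section
/- Let d ≥ 2 and let 0 ≤ p ≤ d²/(d²−1). Then for every X ∈ M_d(ℂ), ((Δ_p^c)† ∘ Δ_p^c)(X) = (p(2−p)/d)·X + (1−p)²·Tr(X)·I_d, where (Δ_p^c)† is the Hilbert–Schmidt adjoint of Δ_p^c. -/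
/-!
`P_p` is a combination of `1` and the projection `Φ = |Φ_d⟩⟨Φ_d|`, and its coefficients are chosen
so that `P_p² = (p/d)·1 + d(1 − p)·Φ`. By cyclicity of the trace,
`⟨Δ_p^c X, Δ_p^c Y⟩ = Tr((X† ⊗ 1) P_p² (Y ⊗ 1) P_p²)`, and the identities
`Tr(Φ (A ⊗ 1)) = Tr A / d` and `Φ (A ⊗ 1) Φ = (Tr A / d) Φ` turn this into
`(p(2 − p)/d) Tr(X† Y) + (1 − p)² conj(Tr X) Tr Y`. Nondegeneracy of the Hilbert–Schmidt pairing
then identifies `(Δ_p^c)† (Δ_p^c X)`.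
-/

open scoped ENNReal ComplexOrder Matrix
open Matrix

noncomputable section

namespace EoP

/-- The Datta–Fukuda–Holevo operator `P_p` for the depolarizing channel. -/
def Pop (d : ℕ) (p : ℝ) : Matrix (Fin d × Fin d) (Fin d × Fin d) ℂ :=
  ((Real.sqrt (p / d) : ℝ) : ℂ) • (1 : Matrix (Fin d × Fin d) (Fin d × Fin d) ℂ)
    + ((Real.sqrt d * (-(Real.sqrt p) / d
          + Real.sqrt (1 - p * ((d : ℝ) ^ 2 - 1) / (d : ℝ) ^ 2)) : ℝ) : ℂ)
        • maxEntState (Fin d)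

/-- Complementary channel of the depolarizing channel in the Datta–Fukuda–Holevo
representation: `Δ_p^c(X) = P_p (X ⊗ I) P_p`. -/
def DeltaC (d : ℕ) (p : ℝ) (X : Matrix (Fin d) (Fin d) ℂ) :
    Matrix (Fin d × Fin d) (Fin d × Fin d) ℂ :=
  Pop d p * (Matrix.kroneckerMap (· * ·) X (1 : Matrix (Fin d) (Fin d) ℂ)) * Pop d p

open scoped Kronecker

lemma _root_.IsIdempotentElem.smul_one_add_smul_sq {R A : Type*} [CommRing R] [Ring A] [Algebra R A]
    {e : A} (he : IsIdempotentElem e) (a b : R) :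
    (a • 1 + b • e) ^ 2 = a ^ 2 • (1 : A) + ((a + b) ^ 2 - a ^ 2) • e := by
  simp only [sq, add_mul, mul_add, smul_mul_smul_comm, one_mul, mul_one, he.eq]
  module

section MaxEntState

variable {α : Type*} [Fintype α] [DecidableEq α]

lemma maxEntState_conjTranspose : (maxEntState α)ᴴ = maxEntState α := by
  ext x y
  simp only [conjTranspose_apply, maxEntState]
  split_ifs <;> simp_all

lemma isIdempotentElem_maxEntState : IsIdempotentElem (maxEntState α) := by
  ext ⟨i, i'⟩ ⟨j, j'⟩
  have : Nonempty α := ⟨i⟩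
  have hcard : (Fintype.card α : ℂ) ≠ 0 := Nat.cast_ne_zero.mpr Fintype.card_ne_zero
  by_cases h1 : i = i' <;> by_cases h2 : j = j' <;>
    simp [maxEntState, mul_apply, Fintype.sum_prod_type, h1, h2, Finset.sum_ite_eq, hcard]

lemma trace_maxEntState_mul_kronecker_one (X : Matrix α α ℂ) :
    (maxEntState α * (X ⊗ₖ (1 : Matrix α α ℂ))).trace = (Fintype.card α : ℂ)⁻¹ * X.trace := by
  simp only [trace, diag_apply, mul_apply, maxEntState, kroneckerMap_apply, one_apply,
    Fintype.sum_prod_type, Finset.mul_sum]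
  refine Finset.sum_congr rfl fun i _ => ?_
  simp [ite_and, Finset.sum_ite_eq, mul_comm]

lemma maxEntState_mul_kronecker_one_mul_maxEntState (X : Matrix α α ℂ) :
    maxEntState α * (X ⊗ₖ (1 : Matrix α α ℂ)) * maxEntState α
      = ((Fintype.card α : ℂ)⁻¹ * X.trace) • maxEntState α := by
  ext ⟨i, i'⟩ ⟨j, j'⟩
  by_cases h1 : i = i' <;> by_cases h2 : j = j' <;>
    simp [maxEntState, mul_apply, kroneckerMap_apply, one_apply, Fintype.sum_prod_type, trace,
      h1, h2, Finset.sum_ite_eq, Finset.sum_ite_eq', Finset.mul_sum, mul_comm,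
      mul_left_comm]

end MaxEntState

lemma trace_kronecker_one_mul_mul_kronecker_one_mul
    {α : Type*} [Fintype α] [DecidableEq α] (A B : Matrix α α ℂ) (c e : ℂ) :
    letI M := c • (1 : Matrix (α × α) (α × α) ℂ) + e • maxEntState α
    ((A ⊗ₖ (1 : Matrix α α ℂ)) * M * (B ⊗ₖ (1 : Matrix α α ℂ)) * M).trace
      = (c ^ 2 * Fintype.card α + 2 * c * e / Fintype.card α) * (A * B).trace
        + e ^ 2 / (Fintype.card α) ^ 2 * A.trace * B.trace := by
  set Φ := maxEntState α
  set K := A ⊗ₖ (1 : Matrix α α ℂ)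
  set L := B ⊗ₖ (1 : Matrix α α ℂ)
  have hKL : K * L = (A * B) ⊗ₖ (1 : Matrix α α ℂ) := by rw [← mul_kronecker_mul, mul_one]
  have hLK : L * K = (B * A) ⊗ₖ (1 : Matrix α α ℂ) := by rw [← mul_kronecker_mul, mul_one]
  have t₁ : (K * L).trace = (A * B).trace * Fintype.card α := by
    rw [hKL, trace_kronecker, trace_one]
  have t₂ : (K * L * Φ).trace = (Fintype.card α : ℂ)⁻¹ * (A * B).trace := by
    rw [trace_mul_cycle, mul_assoc, hKL, trace_maxEntState_mul_kronecker_one]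
  have t₃ : (K * Φ * L).trace = (Fintype.card α : ℂ)⁻¹ * (A * B).trace := by
    rw [trace_mul_cycle, trace_mul_cycle, mul_assoc, hLK, trace_maxEntState_mul_kronecker_one,
      trace_mul_comm]
  have t₄ : (K * Φ * L * Φ).trace
      = (Fintype.card α : ℂ)⁻¹ * A.trace * ((Fintype.card α : ℂ)⁻¹ * B.trace) := by
    rw [trace_mul_comm, ← mul_assoc, ← mul_assoc, maxEntState_mul_kronecker_one_mul_maxEntState,
      smul_mul_assoc, trace_smul, trace_maxEntState_mul_kronecker_one, smul_eq_mul]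
  simp only [mul_add, add_mul, mul_smul_comm, smul_mul_assoc, mul_one, trace_add, trace_smul,
    smul_eq_mul, ← mul_assoc]
  rw [t₁, t₂, t₃, t₄]
  ring

lemma Pop_conjTranspose (d : ℕ) (p : ℝ) : (Pop d p)ᴴ = Pop d p := by
  simp [Pop, conjTranspose_add, conjTranspose_smul, maxEntState_conjTranspose]

lemma Pop_coeffs_sq_sub_sq {d p : ℝ} (hd : 0 < d) (hp : 0 ≤ p)
    (hq : p * (d ^ 2 - 1) / d ^ 2 ≤ 1) :
    (√(p / d) + √d * (-√p / d + √(1 - p * (d ^ 2 - 1) / d ^ 2))) ^ 2 - √(p / d) ^ 2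
      = d * (1 - p) := by
  have hsd : √d ^ 2 = d := Real.sq_sqrt hd.le
  have hsum : √(p / d) + √d * (-√p / d + √(1 - p * (d ^ 2 - 1) / d ^ 2))
      = √d * √(1 - p * (d ^ 2 - 1) / d ^ 2) := by
    rw [Real.sqrt_div hp]
    field_simp
    linear_combination (-√p) * hsd
  rw [hsum, mul_pow, hsd, Real.sq_sqrt (sub_nonneg.mpr hq), Real.sq_sqrt (div_nonneg hp hd.le)]
  field_simp
  ring

lemma Pop_sq {d : ℕ} (hd : d ≠ 0) {p : ℝ} (hp : 0 ≤ p)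
    (hq : p * ((d : ℝ) ^ 2 - 1) / (d : ℝ) ^ 2 ≤ 1) :
    Pop d p ^ 2 = ((p / d : ℝ) : ℂ) • (1 : Matrix (Fin d × Fin d) (Fin d × Fin d) ℂ)
      + (((d : ℝ) * (1 - p) : ℝ) : ℂ) • maxEntState (Fin d) := by
  have hd' : (0 : ℝ) < d := by positivity
  rw [Pop, (isIdempotentElem_maxEntState (α := Fin d)).smul_one_add_smul_sq]
  congr 2
  · exact_mod_cast Real.sq_sqrt (div_nonneg hp hd'.le)
  · exact_mod_cast Pop_coeffs_sq_sub_sq hd' hp hq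

lemma trace_conjTranspose_DeltaC_mul_DeltaC {d : ℕ} (hd : d ≠ 0) {p : ℝ} (hp : 0 ≤ p)
    (hq : p * ((d : ℝ) ^ 2 - 1) / (d : ℝ) ^ 2 ≤ 1) (X Y : Matrix (Fin d) (Fin d) ℂ) :
    ((DeltaC d p X)ᴴ * DeltaC d p Y).trace
      = ((p * (2 - p) / d : ℝ) : ℂ) * (Xᴴ * Y).trace
        + (((1 - p) ^ 2 : ℝ) : ℂ) * Xᴴ.trace * Y.trace := by
  set P := Pop d p
  have hΔ : (DeltaC d p X)ᴴ = P * (Xᴴ ⊗ₖ (1 : Matrix (Fin d) (Fin d) ℂ)) * P := by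
    simp only [DeltaC, conjTranspose_mul, conjTranspose_kronecker, conjTranspose_one,
      Pop_conjTranspose, P, mul_assoc]
  have hcycle : ∀ K L : Matrix (Fin d × Fin d) (Fin d × Fin d) ℂ,
      (P * K * P * (P * L * P)).trace = (K * P ^ 2 * L * P ^ 2).trace := by
    intro K L
    simp only [sq, mul_assoc]
    rw [trace_mul_comm]
    simp only [mul_assoc]
  rw [hΔ, DeltaC, hcycle, Pop_sq hd hp hq,
    trace_kronecker_one_mul_mul_kronecker_one_mul, Fintype.card_fin]
  push_cast
  field_simp
  ring

/-- `(Δ_p^c)† ∘ Δ_p^c = (p(2 − p)/d)·id + (1 − p)²·Tr[·]·I`. -/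
theorem adjoint_square_DeltaC
    (d : ℕ) (hd : 2 ≤ d) (p : ℝ) (hp0 : 0 ≤ p)
    (hp1 : p ≤ (d : ℝ) ^ 2 / ((d : ℝ) ^ 2 - 1))
    (Nadj : Matrix (Fin d × Fin d) (Fin d × Fin d) ℂ → Matrix (Fin d) (Fin d) ℂ)
    (hadj : ∀ (X : Matrix (Fin d) (Fin d) ℂ) (Y : Matrix (Fin d × Fin d) (Fin d × Fin d) ℂ),
      (Yᴴ * DeltaC d p X).trace = ((Nadj Y)ᴴ * X).trace) :
    ∀ X : Matrix (Fin d) (Fin d) ℂ,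
      Nadj (DeltaC d p X)
        = ((p * (2 - p) / (d : ℝ) : ℝ) : ℂ) • X
          + (((1 - p) ^ 2 : ℝ) : ℂ) • X.trace • (1 : Matrix (Fin d) (Fin d) ℂ) := by
  intro X
  have hd0 : d ≠ 0 := by omega
  have hq : p * ((d : ℝ) ^ 2 - 1) / (d : ℝ) ^ 2 ≤ 1 := by
    have hd2 : (0 : ℝ) < (d : ℝ) ^ 2 - 1 := by
      have : (2 : ℝ) ≤ d := by exact_mod_cast hd
      nlinarith
    rw [div_le_one (by positivity)]
    exact (le_div_iff₀ hd2).mp hp1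
  refine conjTranspose_inj.mp (ext_iff_trace_mul_right.mpr fun Y => ?_)
  rw [← hadj Y, trace_conjTranspose_DeltaC_mul_DeltaC hd0 hp0 hq]
  simp only [conjTranspose_add, conjTranspose_smul, conjTranspose_one, add_mul, smul_mul_assoc,
    one_mul, trace_add, trace_smul, smul_eq_mul, trace_conjTranspose, Complex.star_def,
    Complex.conj_ofReal]
  ring

end EoP
end
end
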